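/- arXiv:2001.00013 — 8 statements merged into one kernel-verified Lean document; each statement's English description precedes it below -/
import Mathlib

section
/- For all real θ, μ1, μ2 and all real r1, r2, one has 1 + r1² + r2² + 2·r1·cos(θ−μ1) + 2·r2·cos(θ−μ2) + 2·r1·r2·cos(2θ−μ1−μ2) = |1 + r1·e^{i(θ−μ1)} + r2·e^{−i(θ−μ2)}|², where the right-hand side is the squared modulus of a complex number; in particular the left-hand side is nonnegative, so the quadratic cardioid density f is nonnegative. -/
/-! Expand `‖1 + u + v‖²` with `u = r1 e^{i(θ-μ1)}` and `v = r2 e^{-i(θ-μ2)}`: the squared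
moduli give `1 + r1² + r2²`, the real parts give the two `cos` terms, and the cross term
`u v̄ = r1 r2 e^{i(2θ-μ1-μ2)}` gives the last one. -/

open Real Complex ComplexConjugate

namespace Complex

theorem sq_norm_one_add_add (u v : ℂ) :
    ‖1 + u + v‖ ^ 2
      = 1 + ‖u‖ ^ 2 + ‖v‖ ^ 2 + 2 * u.re + 2 * v.re + 2 * (u * conj v).re := by
  simp only [Complex.sq_norm, normSq_add, map_one, add_mul, one_mul, add_re, conj_re]
  ring

theorem norm_ofReal_mul_exp_I_mul (r x : ℝ) : ‖(r : ℂ) * exp (I * x)‖ = |r| := by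
  rw [norm_mul, mul_comm I, norm_exp_ofReal_mul_I, mul_one, norm_real, Real.norm_eq_abs]

theorem re_ofReal_mul_exp_I_mul (r x : ℝ) : ((r : ℂ) * exp (I * x)).re = r * Real.cos x := by
  rw [re_ofReal_mul, mul_comm I, exp_ofReal_mul_I_re]

theorem ofReal_mul_exp_I_mul_conj (r s x y : ℝ) :
    (r : ℂ) * exp (I * x) * conj ((s : ℂ) * exp (I * y))
      = ((r * s : ℝ) : ℂ) * exp (I * (x - y : ℝ)) := by
  rw [map_mul, conj_ofReal, ← exp_conj, map_mul, conj_I, conj_ofReal, ofReal_mul, ofReal_sub,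
    mul_sub, sub_eq_add_neg, exp_add, neg_mul]
  ring

end Complex

/-- The quadratic cardioid numerator equals a squared complex modulus, and is
hence nonnegative. -/
theorem quadratic_cardioid_numerator_eq_sq_abs (θ μ1 μ2 r1 r2 : ℝ) :
    1 + r1 ^ 2 + r2 ^ 2 + 2 * r1 * Real.cos (θ - μ1) + 2 * r2 * Real.cos (θ - μ2)
        + 2 * r1 * r2 * Real.cos (2 * θ - μ1 - μ2)
      = ‖(1 + (r1 : ℂ) * Complex.exp (Complex.I * ((θ : ℂ) - (μ1 : ℂ)))
          + (r2 : ℂ) * Complex.exp (-Complex.I * ((θ : ℂ) - (μ2 : ℂ))))‖ ^ 2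
    ∧ 0 ≤ 1 + r1 ^ 2 + r2 ^ 2 + 2 * r1 * Real.cos (θ - μ1) + 2 * r2 * Real.cos (θ - μ2)
        + 2 * r1 * r2 * Real.cos (2 * θ - μ1 - μ2) := by
  have hu_arg : I * ((θ : ℂ) - μ1) = I * ((θ - μ1 : ℝ) : ℂ) := by push_cast; rfl
  have hv_arg : -I * ((θ : ℂ) - μ2) = I * ((μ2 - θ : ℝ) : ℂ) := by push_cast; ring
  have key : 1 + r1 ^ 2 + r2 ^ 2 + 2 * r1 * Real.cos (θ - μ1) + 2 * r2 * Real.cos (θ - μ2)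
        + 2 * r1 * r2 * Real.cos (2 * θ - μ1 - μ2)
      = ‖1 + (r1 : ℂ) * exp (I * ((θ : ℂ) - μ1)) + (r2 : ℂ) * exp (-I * ((θ : ℂ) - μ2))‖ ^ 2 := by
    rw [hu_arg, hv_arg, sq_norm_one_add_add, ofReal_mul_exp_I_mul_conj, norm_ofReal_mul_exp_I_mul,
      norm_ofReal_mul_exp_I_mul, re_ofReal_mul_exp_I_mul, re_ofReal_mul_exp_I_mul,
      re_ofReal_mul_exp_I_mul, sq_abs, sq_abs, ← Real.cos_neg (μ2 - θ)]
    ring_nf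
  exact ⟨key, key ▸ sq_nonneg _⟩
end

section
/- For the quadratic cardioid density f with parameters μ1, μ2 ∈ ℝ and r1, r2 ≥ 0, the first trigonometric moment is ∫₀^{2π} e^{iθ} f(θ) dθ = (2π/I)·(r1·e^{iμ1} + r2·e^{iμ2}), where I = 2π(1 + r1² + r2²). -/
/-!
Writing each cosine as a sum of exponentials makes `e^{iθ} f(θ)` a trigonometric polynomial,
and over a full period only its constant term survives. That term comes only from the two
summands `cos (θ - μₖ)`, each contributing `e^{iμₖ}/2`.
-/

open Real

section

open Complex

theorem integral_exp_int_mul_add_mul_I {n : ℤ} (hn : n ≠ 0) (c : ℂ) :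
    ∫ θ in (0 : ℝ)..(2 * π), cexp (I * (n * θ + c)) = 0 := by
  have hnI : I * n ≠ 0 := mul_ne_zero I_ne_zero (Int.cast_ne_zero.mpr hn)
  have hperiod : cexp (I * n * ↑(2 * π)) = 1 := by
    rw [← exp_int_mul_two_pi_mul_I n]; push_cast; ring_nf
  simp_rw [mul_add, Complex.exp_add, ← mul_assoc, intervalIntegral.integral_mul_const,
    integral_exp_mul_complex hnI, hperiod]
  simp

theorem integral_exp_I_mul : ∫ θ in (0 : ℝ)..(2 * π), cexp (I * θ) = 0 := by
  simpa using integral_exp_int_mul_add_mul_I one_ne_zero 0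

theorem exp_I_mul_mul_cos (x y : ℂ) :
    cexp (I * x) * Complex.cos y = (cexp (I * (x + y)) + cexp (I * (x - y))) / 2 := by
  rw [Complex.cos, mul_div_assoc', mul_add, ← Complex.exp_add, ← Complex.exp_add]
  ring_nf

theorem integral_exp_I_mul_mul_cos_sub (μ : ℝ) :
    ∫ θ in (0 : ℝ)..(2 * π), cexp (I * θ) * Complex.cos (θ - μ) = π * cexp (I * μ) := by
  have h : ∀ θ : ℝ, cexp (I * θ) * Complex.cos (θ - μ)
      = (cexp (I * ((2 : ℤ) * θ + -μ)) + cexp (I * μ)) / 2 := by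
    intro θ
    rw [exp_I_mul_mul_cos]
    congr 3 <;> push_cast <;> ring
  simp_rw [h]
  rw [intervalIntegral.integral_div, intervalIntegral.integral_add,
    integral_exp_int_mul_add_mul_I two_ne_zero, intervalIntegral.integral_const]
  · simp only [sub_zero, real_smul, ofReal_mul, ofReal_ofNat, zero_add]
    ring
  all_goals exact (by fun_prop : Continuous _).intervalIntegrable _ _

theorem integral_exp_I_mul_mul_cos_two_mul_sub (μ : ℝ) :
    ∫ θ in (0 : ℝ)..(2 * π), cexp (I * θ) * Complex.cos (2 * θ - μ) = 0 := by
  have h : ∀ θ : ℝ, cexp (I * θ) * Complex.cos (2 * θ - μ)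
      = (cexp (I * ((3 : ℤ) * θ + -μ)) + cexp (I * ((-1 : ℤ) * θ + μ))) / 2 := by
    intro θ
    rw [exp_I_mul_mul_cos]
    congr 3 <;> push_cast <;> ring
  simp_rw [h]
  rw [intervalIntegral.integral_div, intervalIntegral.integral_add,
    integral_exp_int_mul_add_mul_I three_ne_zero, integral_exp_int_mul_add_mul_I (by norm_num)]
  · simp
  all_goals exact (by fun_prop : Continuous _).intervalIntegrable _ _

end

theorem quadratic_cardioid_first_moment_general (μ1 μ2 r1 r2 : ℝ)
    (I : ℝ)
    (f : ℝ → ℝ)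
    (hf : ∀ θ, f θ = (1 / I) * (1 + r1 ^ 2 + r2 ^ 2 + 2 * r1 * Real.cos (θ - μ1)
      + 2 * r2 * Real.cos (θ - μ2) + 2 * r1 * r2 * Real.cos (2 * θ - μ1 - μ2))) :
    ∫ θ in (0 : ℝ)..(2 * π), Complex.exp (Complex.I * (θ : ℂ)) * (f θ : ℂ)
      = ((2 * π / I : ℝ) : ℂ) * ((r1 : ℂ) * Complex.exp (Complex.I * (μ1 : ℂ))
          + (r2 : ℂ) * Complex.exp (Complex.I * (μ2 : ℂ))) := by
  have hexpand : ∀ θ : ℝ, Complex.exp (Complex.I * θ) * (f θ : ℂ) = (1 / I : ℂ) *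
      ((1 + r1 ^ 2 + r2 ^ 2 : ℂ) * Complex.exp (Complex.I * θ)
        + 2 * r1 * (Complex.exp (Complex.I * θ) * Complex.cos (θ - μ1))
        + 2 * r2 * (Complex.exp (Complex.I * θ) * Complex.cos (θ - μ2))
        + 2 * r1 * r2 * (Complex.exp (Complex.I * θ) * Complex.cos (2 * θ - ↑(μ1 + μ2)))) := by
    intro θ
    rw [hf θ]
    push_cast
    rw [sub_sub]
    ring
  have hint : ∀ g : ℝ → ℂ, Continuous g → IntervalIntegrable g MeasureTheory.volume 0 (2 * π) :=
    fun g hg ↦ hg.intervalIntegrable _ _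
  simp_rw [hexpand]
  rw [intervalIntegral.integral_const_mul, intervalIntegral.integral_add (hint _ (by fun_prop))
      (hint _ (by fun_prop)), intervalIntegral.integral_add (hint _ (by fun_prop))
      (hint _ (by fun_prop)), intervalIntegral.integral_add (hint _ (by fun_prop))
      (hint _ (by fun_prop))]
  simp only [intervalIntegral.integral_const_mul, integral_exp_I_mul,
    integral_exp_I_mul_mul_cos_sub, integral_exp_I_mul_mul_cos_two_mul_sub]
  push_cast
  ring

/-- The first trigonometric moment of the quadratic cardioid density. -/
theorem quadratic_cardioid_first_moment (μ1 μ2 r1 r2 : ℝ) (hr1 : 0 ≤ r1) (hr2 : 0 ≤ r2)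
    (I : ℝ) (hI : I = 2 * π * (1 + r1 ^ 2 + r2 ^ 2))
    (f : ℝ → ℝ)
    (hf : ∀ θ, f θ = (1 / I) * (1 + r1 ^ 2 + r2 ^ 2 + 2 * r1 * Real.cos (θ - μ1)
      + 2 * r2 * Real.cos (θ - μ2) + 2 * r1 * r2 * Real.cos (2 * θ - μ1 - μ2))) :
    ∫ θ in (0 : ℝ)..(2 * π), Complex.exp (Complex.I * (θ : ℂ)) * (f θ : ℂ)
      = ((2 * π / I : ℝ) : ℂ) * ((r1 : ℂ) * Complex.exp (Complex.I * (μ1 : ℂ))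
          + (r2 : ℂ) * Complex.exp (Complex.I * (μ2 : ℂ))) :=
  quadratic_cardioid_first_moment_general μ1 μ2 r1 r2 I f hf
end

section
/- For the quadratic cardioid density f with parameters μ1, μ2 ∈ ℝ and r1, r2 ≥ 0, the mean resultant length satisfies |∫₀^{2π} e^{iθ} f(θ) dθ| = √(r1² + r2² + 2·r1·r2·cos(μ1−μ2)) / (1 + r1² + r2²). -/
/-!
Write `w = e^{iθ}` and `ζⱼ = e^{iμⱼ}`. Since `2 cos (x - y) = e^{ix} e^{-iy} + e^{-ix} e^{iy}`, the
product `e^{iθ} f(θ)` is a Laurent polynomial in `w` with exponents `-1, 0, 1, 2, 3`. Over a full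
period every nonzero power of `w` integrates to zero, so the first trigonometric moment is
`2π (r₁ ζ₁ + r₂ ζ₂) / I = (r₁ ζ₁ + r₂ ζ₂) / (1 + r₁² + r₂²)`, and the law of cosines gives
`|r₁ ζ₁ + r₂ ζ₂|² = r₁² + r₂² + 2 r₁ r₂ cos (μ₁ - μ₂)`.
-/

open Real

section

open Complex MeasureTheory

theorem integral_exp_mul_I_zpow_eq_zero {n : ℤ} (hn : n ≠ 0) :
    ∫ θ in (0 : ℝ)..2 * π, exp (θ * I) ^ n = 0 := by
  have hc : (n : ℂ) * I ≠ 0 := mul_ne_zero (Int.cast_ne_zero.mpr hn) I_ne_zero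
  simp_rw [← exp_int_mul, ← mul_assoc, mul_right_comm _ _ I]
  rw [integral_exp_mul_complex hc, ofReal_zero, mul_zero, Complex.exp_zero,
    show (n : ℂ) * I * (2 * π : ℝ) = n * (2 * π * I) by push_cast; ring,
    exp_int_mul_two_pi_mul_I, sub_self, zero_div]

theorem integral_add_mul_exp_zpow {g : ℝ → ℂ} (hg : IntervalIntegrable g volume 0 (2 * π))
    (c : ℂ) {n : ℤ} (hn : n ≠ 0) :
    ∫ θ in (0 : ℝ)..2 * π, (g θ + c * exp (θ * I) ^ n) = ∫ θ in (0 : ℝ)..2 * π, g θ := by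
  have hw : Continuous fun θ : ℝ => exp (θ * I) ^ n :=
    (by fun_prop : Continuous fun θ : ℝ => exp (θ * I)).zpow₀ n fun _ => .inl (exp_ne_zero _)
  rw [intervalIntegral.integral_add hg ((hw.const_mul c).intervalIntegrable _ _),
    intervalIntegral.integral_const_mul, integral_exp_mul_I_zpow_eq_zero hn, mul_zero, add_zero]

theorem cos_sub_eq_exp_mul_inv (z u : ℂ) :
    cos (z - u) = (exp (z * I) * (exp (u * I))⁻¹ + (exp (z * I))⁻¹ * exp (u * I)) / 2 := by
  rw [Complex.cos, neg_mul, ← neg_mul, neg_sub]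
  simp only [sub_mul, Complex.exp_sub, div_eq_mul_inv]
  ring

theorem exp_mul_I_mul_quadratic_cardioid (θ μ₁ μ₂ r₁ r₂ : ℝ) :
    exp (θ * I) * ((1 + r₁ ^ 2 + r₂ ^ 2 + 2 * r₁ * Real.cos (θ - μ₁) + 2 * r₂ * Real.cos (θ - μ₂)
        + 2 * r₁ * r₂ * Real.cos (2 * θ - μ₁ - μ₂) : ℝ) : ℂ) =
      (r₁ * exp (μ₁ * I) + r₂ * exp (μ₂ * I))
        + (1 + r₁ ^ 2 + r₂ ^ 2) * exp (θ * I) ^ (1 : ℤ)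
        + (r₁ * (exp (μ₁ * I))⁻¹ + r₂ * (exp (μ₂ * I))⁻¹) * exp (θ * I) ^ (2 : ℤ)
        + r₁ * r₂ * (exp (μ₁ * I) * exp (μ₂ * I))⁻¹ * exp (θ * I) ^ (3 : ℤ)
        + r₁ * r₂ * (exp (μ₁ * I) * exp (μ₂ * I)) * exp (θ * I) ^ (-1 : ℤ) := by
  have h2 : exp (2 * θ * I) = exp (θ * I) ^ 2 := by
    rw [← Complex.exp_nat_mul]
    push_cast
    ring_nf
  push_cast
  simp only [sub_sub, cos_sub_eq_exp_mul_inv, h2, add_mul, Complex.exp_add]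
  have hw := exp_ne_zero (θ * I)
  have hζ₁ := exp_ne_zero (μ₁ * I)
  have hζ₂ := exp_ne_zero (μ₂ * I)
  generalize exp (θ * I) = w at hw ⊢
  generalize exp (μ₁ * I) = ζ₁ at hζ₁ ⊢
  generalize exp (μ₂ * I) = ζ₂ at hζ₂ ⊢
  field_simp
  ring

theorem norm_mul_exp_add_mul_exp (r₁ r₂ μ₁ μ₂ : ℝ) :
    ‖r₁ * exp (μ₁ * I) + r₂ * exp (μ₂ * I)‖
      = √(r₁ ^ 2 + r₂ ^ 2 + 2 * r₁ * r₂ * Real.cos (μ₁ - μ₂)) := by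
  rw [norm_def, normSq_apply]
  simp only [exp_mul_I, ← ofReal_cos, ← ofReal_sin, add_re, add_im, mul_re, mul_im, ofReal_re,
    ofReal_im, I_re, I_im]
  congr 1
  rw [Real.cos_sub]
  linear_combination r₁ ^ 2 * Real.sin_sq_add_cos_sq μ₁ + r₂ ^ 2 * Real.sin_sq_add_cos_sq μ₂

end

theorem quadratic_cardioid_mean_resultant_length_general (μ1 μ2 r1 r2 : ℝ)
    (I : ℝ) (hI : I = 2 * π * (1 + r1 ^ 2 + r2 ^ 2))
    (f : ℝ → ℝ)
    (hf : ∀ θ, f θ = (1 / I) * (1 + r1 ^ 2 + r2 ^ 2 + 2 * r1 * Real.cos (θ - μ1)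
      + 2 * r2 * Real.cos (θ - μ2) + 2 * r1 * r2 * Real.cos (2 * θ - μ1 - μ2))) :
    ‖∫ θ in (0 : ℝ)..(2 * π), Complex.exp (Complex.I * (θ : ℂ)) * (f θ : ℂ)‖
      = Real.sqrt (r1 ^ 2 + r2 ^ 2 + 2 * r1 * r2 * Real.cos (μ1 - μ2))
          / (1 + r1 ^ 2 + r2 ^ 2) := by
  have hI₀ : 0 ≤ I := by rw [hI]; positivity
  simp only [hf, Complex.ofReal_mul, mul_left_comm (Complex.exp _), mul_comm Complex.I,
    exp_mul_I_mul_quadratic_cardioid]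
  rw [intervalIntegral.integral_const_mul,
    integral_add_mul_exp_zpow _ _ (by decide : (-1 : ℤ) ≠ 0),
    integral_add_mul_exp_zpow _ _ three_ne_zero, integral_add_mul_exp_zpow _ _ two_ne_zero,
    integral_add_mul_exp_zpow _ _ one_ne_zero, intervalIntegral.integral_const]
  · rw [sub_zero, Complex.real_smul, norm_mul, norm_mul, norm_mul_exp_add_mul_exp, Complex.ofReal_div,
      Complex.ofReal_one, norm_div, norm_one, Complex.norm_real, Complex.norm_real,
      Real.norm_of_nonneg hI₀, Real.norm_of_nonneg (by positivity), hI]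
    field_simp
  all_goals exact (by fun_prop (disch := simp) : Continuous _).intervalIntegrable _ _

/-- The mean resultant length of the quadratic cardioid distribution. -/
theorem quadratic_cardioid_mean_resultant_length (μ1 μ2 r1 r2 : ℝ)
    (hr1 : 0 ≤ r1) (hr2 : 0 ≤ r2)
    (I : ℝ) (hI : I = 2 * π * (1 + r1 ^ 2 + r2 ^ 2))
    (f : ℝ → ℝ)
    (hf : ∀ θ, f θ = (1 / I) * (1 + r1 ^ 2 + r2 ^ 2 + 2 * r1 * Real.cos (θ - μ1)
      + 2 * r2 * Real.cos (θ - μ2) + 2 * r1 * r2 * Real.cos (2 * θ - μ1 - μ2))) :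
    ‖∫ θ in (0 : ℝ)..(2 * π), Complex.exp (Complex.I * (θ : ℂ)) * (f θ : ℂ)‖
      = Real.sqrt (r1 ^ 2 + r2 ^ 2 + 2 * r1 * r2 * Real.cos (μ1 - μ2))
          / (1 + r1 ^ 2 + r2 ^ 2) :=
  quadratic_cardioid_mean_resultant_length_general μ1 μ2 r1 r2 I hI f hf
end

section
/- Let f be the quadratic cardioid density with parameters μ1, μ2 ∈ ℝ and r1, r2 ≥ 0. For every φ ∈ ℝ, one has ∫_φ^{φ+π} f(θ) dθ = 1/2 − (4/I)·(r1·sin(φ−μ1) + r2·sin(φ−μ2)), where I = 2π(1 + r1² + r2²). In particular, ∫_φ^{φ+π} f(θ) dθ = 1/2 if and only if r1·sin(φ−μ1) + r2·sin(φ−μ2) = 0. -/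
open Real

/-! The constant term of the density contributes `π (1 + r1² + r2²) / I = 1/2`, each first
harmonic `cos (θ - μ)` integrates over a half period to `-2 sin (φ - μ)`, and the second harmonic
`cos (2θ - μ1 - μ2)` integrates to zero over its full period `π`. -/

theorem integral_cos_sub_half_period (φ μ : ℝ) :
    ∫ θ in φ..(φ + π), cos (θ - μ) = -2 * sin (φ - μ) := by
  rw [intervalIntegral.integral_comp_sub_right (fun x => cos x), integral_cos,
    show φ + π - μ = φ - μ + π by ring, sin_add_pi]
  ring

theorem integral_cos_two_mul_sub_half_period (φ ν : ℝ) :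
    ∫ θ in φ..(φ + π), cos (2 * θ - ν) = 0 := by
  rw [intervalIntegral.integral_comp_mul_sub (fun x => cos x) two_ne_zero, integral_cos,
    show 2 * (φ + π) - ν = 2 * φ - ν + 2 * π by ring, sin_add_two_pi, sub_self, smul_zero]

theorem integral_cardioid_kernel_half_period (μ1 μ2 r1 r2 φ : ℝ) :
    ∫ θ in φ..(φ + π), (1 + r1 ^ 2 + r2 ^ 2 + 2 * r1 * cos (θ - μ1)
      + 2 * r2 * cos (θ - μ2) + 2 * r1 * r2 * cos (2 * θ - μ1 - μ2))
      = π * (1 + r1 ^ 2 + r2 ^ 2) - 4 * (r1 * sin (φ - μ1) + r2 * sin (φ - μ2)) := by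
  have hint : ∀ g : ℝ → ℝ, Continuous g → IntervalIntegrable g MeasureTheory.volume φ (φ + π) :=
    fun g hg => hg.intervalIntegrable _ _
  simp_rw [sub_sub _ μ1 μ2]
  rw [intervalIntegral.integral_add (hint _ (by fun_prop)) (hint _ (by fun_prop)),
    intervalIntegral.integral_add (hint _ (by fun_prop)) (hint _ (by fun_prop)),
    intervalIntegral.integral_add (hint _ (by fun_prop)) (hint _ (by fun_prop)),
    intervalIntegral.integral_const_mul, intervalIntegral.integral_const_mul,
    intervalIntegral.integral_const_mul, integral_cos_sub_half_period,
    integral_cos_sub_half_period, integral_cos_two_mul_sub_half_period, intervalIntegral.integral_const]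
  simp only [add_sub_cancel_left, smul_eq_mul]
  ring

theorem quadratic_cardioid_half_arc_integral_general (μ1 μ2 r1 r2 : ℝ)
    (I : ℝ) (hI : I = 2 * π * (1 + r1 ^ 2 + r2 ^ 2))
    (f : ℝ → ℝ)
    (hf : ∀ θ, f θ = (1 / I) * (1 + r1 ^ 2 + r2 ^ 2 + 2 * r1 * Real.cos (θ - μ1)
      + 2 * r2 * Real.cos (θ - μ2) + 2 * r1 * r2 * Real.cos (2 * θ - μ1 - μ2)))
    (φ : ℝ) :
    (∫ θ in φ..(φ + π), f θ)
        = 1 / 2 - (4 / I) * (r1 * Real.sin (φ - μ1) + r2 * Real.sin (φ - μ2))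
    ∧ ((∫ θ in φ..(φ + π), f θ) = 1 / 2
        ↔ r1 * Real.sin (φ - μ1) + r2 * Real.sin (φ - μ2) = 0) := by
  have hI0 : I ≠ 0 := by rw [hI]; positivity
  have hval : (∫ θ in φ..(φ + π), f θ)
      = 1 / 2 - (4 / I) * (r1 * sin (φ - μ1) + r2 * sin (φ - μ2)) := by
    simp_rw [hf]
    rw [intervalIntegral.integral_const_mul, integral_cardioid_kernel_half_period, hI]
    field_simp
  refine ⟨hval, ?_⟩
  rw [hval, sub_eq_self, mul_eq_zero]
  simp [hI0]

/-- The probability of the half-circle arc `[φ, φ + π]` under the quadratic cardioid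
density, and the characterization of median directions. -/
theorem quadratic_cardioid_half_arc_integral (μ1 μ2 r1 r2 : ℝ)
    (hr1 : 0 ≤ r1) (hr2 : 0 ≤ r2)
    (I : ℝ) (hI : I = 2 * π * (1 + r1 ^ 2 + r2 ^ 2))
    (f : ℝ → ℝ)
    (hf : ∀ θ, f θ = (1 / I) * (1 + r1 ^ 2 + r2 ^ 2 + 2 * r1 * Real.cos (θ - μ1)
      + 2 * r2 * Real.cos (θ - μ2) + 2 * r1 * r2 * Real.cos (2 * θ - μ1 - μ2)))
    (φ : ℝ) :
    (∫ θ in φ..(φ + π), f θ)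
        = 1 / 2 - (4 / I) * (r1 * Real.sin (φ - μ1) + r2 * Real.sin (φ - μ2))
    ∧ ((∫ θ in φ..(φ + π), f θ) = 1 / 2
        ↔ r1 * Real.sin (φ - μ1) + r2 * Real.sin (φ - μ2) = 0) :=
  quadratic_cardioid_half_arc_integral_general μ1 μ2 r1 r2 I hI f hf φ
end

section
/- Let f be the quadratic cardioid density with parameters μ1, μ2 ∈ ℝ and r1, r2 ≥ 0. If r1 = r2, then f is symmetric about (μ1+μ2)/2, i.e. f((μ1+μ2)/2 + t) = f((μ1+μ2)/2 − t) for all t ∈ ℝ. If μ1 = μ2, then f is symmetric about μ1. If r2 = 0 (respectively r1 = 0), then f is symmetric about μ1 (respectively μ2). -/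
/-!
Write `K μ₁ μ₂ r₁ r₂` for the unnormalised density. Reflecting `θ` about `c` maps `K μ₁ μ₂ r₁ r₂`
to `K (2c - μ₁) (2c - μ₂) r₁ r₂`, and `K` is invariant under swapping the two components
`(μ₁, r₁) ↔ (μ₂, r₂)`. Each sufficient condition makes the reflected parameters equal to the
original ones up to such a swap, or up to a location `μᵢ` whose weight `rᵢ` vanishes.
-/

open Real

namespace QuadraticCardioid

def IsSymmetricAbout (f : ℝ → ℝ) (θ₀ : ℝ) : Prop :=
  ∀ t, f (θ₀ + t) = f (θ₀ - t)

theorem IsSymmetricAbout.const_mul {f : ℝ → ℝ} {θ₀ : ℝ} (h : IsSymmetricAbout f θ₀) (a : ℝ) :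
    IsSymmetricAbout (fun θ => a * f θ) θ₀ := fun t => by
  simp only [h t]

noncomputable def kernel (μ₁ μ₂ r₁ r₂ θ : ℝ) : ℝ :=
  1 + r₁ ^ 2 + r₂ ^ 2 + 2 * r₁ * cos (θ - μ₁) + 2 * r₂ * cos (θ - μ₂)
    + 2 * r₁ * r₂ * cos (2 * θ - μ₁ - μ₂)

theorem kernel_swap (μ₁ μ₂ r₁ r₂ : ℝ) : kernel μ₂ μ₁ r₂ r₁ = kernel μ₁ μ₂ r₁ r₂ := by
  funext θ
  simp only [kernel, sub_sub, add_comm μ₂ μ₁]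
  ring

theorem kernel_reflect (μ₁ μ₂ r₁ r₂ c t : ℝ) :
    kernel μ₁ μ₂ r₁ r₂ (c - t) = kernel (2 * c - μ₁) (2 * c - μ₂) r₁ r₂ (c + t) := by
  rw [kernel, kernel, ← cos_neg (c - t - μ₁), ← cos_neg (c - t - μ₂),
    ← cos_neg (2 * (c - t) - μ₁ - μ₂)]
  ring_nf

theorem kernel_zero_right (μ₁ μ₂ μ₂' r₁ : ℝ) : kernel μ₁ μ₂ r₁ 0 = kernel μ₁ μ₂' r₁ 0 := by
  funext θ
  simp only [kernel]
  ring

theorem kernel_symmetricAbout_of_reflect_eq {μ₁ μ₂ r₁ r₂ c : ℝ}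
    (h : kernel (2 * c - μ₁) (2 * c - μ₂) r₁ r₂ = kernel μ₁ μ₂ r₁ r₂) :
    IsSymmetricAbout (kernel μ₁ μ₂ r₁ r₂) c := fun t => by
  rw [kernel_reflect, h]

theorem kernel_symmetricAbout_midpoint (μ₁ μ₂ r : ℝ) :
    IsSymmetricAbout (kernel μ₁ μ₂ r r) ((μ₁ + μ₂) / 2) :=
  kernel_symmetricAbout_of_reflect_eq <| by
    rw [show 2 * ((μ₁ + μ₂) / 2) - μ₁ = μ₂ by ring, show 2 * ((μ₁ + μ₂) / 2) - μ₂ = μ₁ by ring,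
      kernel_swap]

theorem kernel_symmetricAbout_of_eq (μ r₁ r₂ : ℝ) : IsSymmetricAbout (kernel μ μ r₁ r₂) μ :=
  kernel_symmetricAbout_of_reflect_eq <| by rw [two_mul, add_sub_cancel_right]

theorem kernel_symmetricAbout_of_zero_right (μ₁ μ₂ r₁ : ℝ) :
    IsSymmetricAbout (kernel μ₁ μ₂ r₁ 0) μ₁ :=
  kernel_symmetricAbout_of_reflect_eq <| by
    rw [two_mul, add_sub_cancel_right, kernel_zero_right μ₁ _ μ₂]

theorem kernel_symmetricAbout_of_zero_left (μ₁ μ₂ r₂ : ℝ) :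
    IsSymmetricAbout (kernel μ₁ μ₂ 0 r₂) μ₂ := by
  rw [← kernel_swap]
  exact kernel_symmetricAbout_of_zero_right μ₂ μ₁ r₂

end QuadraticCardioid

open QuadraticCardioid

theorem quadratic_cardioid_symmetry_sufficient_general (μ1 μ2 r1 r2 : ℝ)
    (I : ℝ)
    (f : ℝ → ℝ)
    (hf : ∀ θ, f θ = (1 / I) * (1 + r1 ^ 2 + r2 ^ 2 + 2 * r1 * Real.cos (θ - μ1)
      + 2 * r2 * Real.cos (θ - μ2) + 2 * r1 * r2 * Real.cos (2 * θ - μ1 - μ2))) :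
    (r1 = r2 → ∀ t : ℝ, f ((μ1 + μ2) / 2 + t) = f ((μ1 + μ2) / 2 - t))
    ∧ (μ1 = μ2 → ∀ t : ℝ, f (μ1 + t) = f (μ1 - t))
    ∧ (r2 = 0 → ∀ t : ℝ, f (μ1 + t) = f (μ1 - t))
    ∧ (r1 = 0 → ∀ t : ℝ, f (μ2 + t) = f (μ2 - t)) := by
  obtain rfl : f = fun θ => 1 / I * kernel μ1 μ2 r1 r2 θ := funext hf
  refine ⟨?_, ?_, ?_, ?_⟩ <;> rintro rfl
  · exact (kernel_symmetricAbout_midpoint μ1 μ2 r1).const_mul _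
  · exact (kernel_symmetricAbout_of_eq μ1 r1 r2).const_mul _
  · exact (kernel_symmetricAbout_of_zero_right μ1 μ2 r1).const_mul _
  · exact (kernel_symmetricAbout_of_zero_left μ1 μ2 r2).const_mul _

/-- Sufficient conditions for symmetry of the quadratic cardioid density. -/
theorem quadratic_cardioid_symmetry_sufficient (μ1 μ2 r1 r2 : ℝ)
    (hr1 : 0 ≤ r1) (hr2 : 0 ≤ r2)
    (I : ℝ) (hI : I = 2 * π * (1 + r1 ^ 2 + r2 ^ 2))
    (f : ℝ → ℝ)
    (hf : ∀ θ, f θ = (1 / I) * (1 + r1 ^ 2 + r2 ^ 2 + 2 * r1 * Real.cos (θ - μ1)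
      + 2 * r2 * Real.cos (θ - μ2) + 2 * r1 * r2 * Real.cos (2 * θ - μ1 - μ2))) :
    (r1 = r2 → ∀ t : ℝ, f ((μ1 + μ2) / 2 + t) = f ((μ1 + μ2) / 2 - t))
    ∧ (μ1 = μ2 → ∀ t : ℝ, f (μ1 + t) = f (μ1 - t))
    ∧ (r2 = 0 → ∀ t : ℝ, f (μ1 + t) = f (μ1 - t))
    ∧ (r1 = 0 → ∀ t : ℝ, f (μ2 + t) = f (μ2 - t)) :=
  quadratic_cardioid_symmetry_sufficient_general μ1 μ2 r1 r2 I f hf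
end

section
/- Let f be the quadratic cardioid density with parameters μ1 = μ2 = μ ∈ ℝ and r1, r2 > 0. Then θ = μ is a strict local maximum of f (it is a mode of the distribution). -/
/-!
With `μ1 = μ2 = μ` and `x = θ - μ`, the density is
`(1/I) (1 + r1² + r2² + 2 (r1 + r2) cos x + 2 r1 r2 cos 2x)`.
Both cosines attain their maximum `1` at `x = 0`, and for `0 < |x| < 2π` the first one is strictly
below `1`, so `μ` is a strict maximum on the punctured interval `|θ - μ| < 2π`.
-/

open Real

namespace Real

theorem cos_lt_one_of_ne_zero_of_abs_lt {x : ℝ} (hx₀ : x ≠ 0) (hx : |x| < 2 * π) : cos x < 1 := by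
  obtain ⟨hx₁, hx₂⟩ := abs_lt.mp hx
  exact (cos_le_one x).lt_of_ne fun h ↦ hx₀ ((cos_eq_one_iff_of_lt_of_lt hx₁ hx₂).mp h)

theorem mul_cos_add_mul_cos_two_mul_lt {a b x : ℝ} (ha : 0 < a) (hb : 0 ≤ b) (hx₀ : x ≠ 0)
    (hx : |x| < 2 * π) : a * cos x + b * cos (2 * x) < a + b := by
  have h₁ : a * cos x < a := mul_lt_of_lt_one_right ha (cos_lt_one_of_ne_zero_of_abs_lt hx₀ hx)
  have h₂ : b * cos (2 * x) ≤ b := mul_le_of_le_one_right hb (cos_le_one _)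
  linarith

end Real

/-- When `μ1 = μ2 = μ` and `r1, r2 > 0`, the point `θ = μ` is a strict local maximum
(a mode) of the quadratic cardioid density. -/
theorem quadratic_cardioid_mode_at_mu (μ r1 r2 : ℝ)
    (hr1 : 0 < r1) (hr2 : 0 < r2)
    (I : ℝ) (hI : I = 2 * π * (1 + r1 ^ 2 + r2 ^ 2))
    (f : ℝ → ℝ)
    (hf : ∀ θ, f θ = (1 / I) * (1 + r1 ^ 2 + r2 ^ 2 + 2 * r1 * Real.cos (θ - μ)
      + 2 * r2 * Real.cos (θ - μ) + 2 * r1 * r2 * Real.cos (2 * θ - μ - μ))) :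
    ∃ ε > 0, ∀ θ : ℝ, θ ≠ μ → |θ - μ| < ε → f θ < f μ := by
  have hI_pos : 0 < I := by rw [hI]; positivity
  refine ⟨2 * π, by positivity, fun θ hθ hθμ ↦ ?_⟩
  have key := mul_cos_add_mul_cos_two_mul_lt (a := 2 * r1 + 2 * r2) (b := 2 * r1 * r2)
    (by positivity) (by positivity) (sub_ne_zero.mpr hθ) hθμ
  have h2θ : 2 * θ - μ - μ = 2 * (θ - μ) := by ring
  have h2μ : 2 * μ - μ - μ = 0 := by ring
  rw [hf θ, hf μ, h2θ, h2μ, sub_self, cos_zero]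
  exact mul_lt_mul_of_pos_left (by linarith) (one_div_pos.mpr hI_pos)
end

section
/- Let f be the quadratic cardioid density with parameters μ1 = μ2 = μ ∈ ℝ and r1, r2 > 0, and suppose 4·r1·r2 ≠ r1 + r2. Then θ = μ + π is a critical point of f, and it is a strict local maximum of f if and only if 4·r1·r2 > r1 + r2; if 4·r1·r2 < r1 + r2 then θ = μ + π is a strict local minimum of f. -/
/-!
Put `t = θ - (μ + π)`, `s = r₁ + r₂` and `p = r₁ r₂`. Since `cos (θ - μ) = -cos t` and
`cos (2θ - 2μ) = 2 cos² t - 1`, the density satisfies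
`f θ - f (μ + π) = (1 - cos t) (s - 4p + 2p (1 - cos t)) / (π (1 + r₁² + r₂²))`.
The first factor is positive on a punctured neighbourhood of `t = 0` and the second tends to
`s - 4p ≠ 0`, so near `μ + π` the sign of `f θ - f (μ + π)` is that of `s - 4p`. Hence `μ + π`
is a strict local minimum when `4p < s` and a strict local maximum when `4p > s`, and in either
case a critical point by Fermat's theorem.
-/

open Real Filter Topology

noncomputable def quadraticCardioid (μ₁ μ₂ r₁ r₂ θ : ℝ) : ℝ :=
  (1 + r₁ ^ 2 + r₂ ^ 2 + 2 * r₁ * cos (θ - μ₁) + 2 * r₂ * cos (θ - μ₂)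
    + 2 * r₁ * r₂ * cos (2 * θ - μ₁ - μ₂)) / (2 * π * (1 + r₁ ^ 2 + r₂ ^ 2))

theorem quadraticCardioid_sub_antipode (μ r₁ r₂ θ : ℝ) :
    quadraticCardioid μ μ r₁ r₂ θ - quadraticCardioid μ μ r₁ r₂ (μ + π) =
      (1 - cos (θ - (μ + π))) * (r₁ + r₂ - 4 * r₁ * r₂ + 2 * r₁ * r₂ * (1 - cos (θ - (μ + π))))
        / (π * (1 + r₁ ^ 2 + r₂ ^ 2)) := by
  have hθ : θ - μ = θ - (μ + π) + π := by ring
  have h2θ : 2 * θ - μ - μ = 2 * (θ - (μ + π)) + 2 * π := by ring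
  have hπ : μ + π - μ = π := by ring
  have h2π : 2 * (μ + π) - μ - μ = 2 * π := by ring
  simp only [quadraticCardioid, hθ, h2θ, hπ, h2π, cos_add_pi, cos_add_two_pi, cos_two_mul,
    cos_pi]
  field_simp
  ring

theorem eventually_nhdsNE_iff_abs_sub_lt {a : ℝ} {P : ℝ → Prop} :
    (∀ᶠ x in 𝓝[≠] a, P x) ↔ ∃ ε > 0, ∀ x, x ≠ a → |x - a| < ε → P x := by
  simp only [eventually_nhdsWithin_iff, Metric.eventually_nhds_iff, Real.dist_eq,
    Set.mem_compl_singleton_iff]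
  constructor
  · exact fun ⟨ε, hε, h⟩ => ⟨ε, hε, fun x hx hlt => h hlt hx⟩
  · exact fun ⟨ε, hε, h⟩ => ⟨ε, hε, fun x hlt hx => h x hx hlt⟩

theorem eventually_nhdsNE_one_sub_cos_sub_pos (a : ℝ) :
    ∀ᶠ θ in 𝓝[≠] a, 0 < 1 - cos (θ - a) := by
  refine eventually_nhdsNE_iff_abs_sub_lt.2 ⟨2 * π, by positivity, fun θ hθ hlt => ?_⟩
  obtain ⟨hlo, hhi⟩ := abs_lt.1 hlt
  have hne : cos (θ - a) ≠ 1 := fun h =>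
    hθ (sub_eq_zero.1 ((cos_eq_one_iff_of_lt_of_lt hlo hhi).1 h))
  linarith [lt_of_le_of_ne (cos_le_one (θ - a)) hne]

theorem IsLocalMax.of_eventually_nhdsNE_lt {f : ℝ → ℝ} {a : ℝ}
    (h : ∀ᶠ x in 𝓝[≠] a, f x < f a) : IsLocalMax f a := by
  filter_upwards [eventually_nhdsWithin_iff.1 h] with x hx
  rcases eq_or_ne x a with rfl | hxa
  exacts [le_rfl, (hx hxa).le]

theorem IsLocalMin.of_eventually_nhdsNE_lt {f : ℝ → ℝ} {a : ℝ}
    (h : ∀ᶠ x in 𝓝[≠] a, f a < f x) : IsLocalMin f a := by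
  simpa using (IsLocalMax.of_eventually_nhdsNE_lt (f := fun x => -f x)
    (h.mono fun _ hx => neg_lt_neg hx)).neg

theorem quadraticCardioid_sub_antipode_mul_pos {μ r₁ r₂ : ℝ} (hd : r₁ + r₂ - 4 * r₁ * r₂ ≠ 0) :
    ∀ᶠ θ in 𝓝[≠] (μ + π), 0 <
      (quadraticCardioid μ μ r₁ r₂ θ - quadraticCardioid μ μ r₁ r₂ (μ + π))
        * (r₁ + r₂ - 4 * r₁ * r₂) := by
  set d := r₁ + r₂ - 4 * r₁ * r₂
  set g : ℝ → ℝ := fun θ => (d + 2 * r₁ * r₂ * (1 - cos (θ - (μ + π)))) * d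
  have hg : Tendsto g (𝓝 (μ + π)) (𝓝 (d * d)) := by
    have hcont : Continuous g := by fun_prop
    simpa [g] using hcont.tendsto (μ + π)
  have hg_pos : ∀ᶠ θ in 𝓝[≠] (μ + π), 0 < g θ :=
    nhdsWithin_le_nhds (hg.eventually (lt_mem_nhds (mul_self_pos.2 hd)))
  have hden : 0 < π * (1 + r₁ ^ 2 + r₂ ^ 2) := by positivity
  filter_upwards [eventually_nhdsNE_one_sub_cos_sub_pos (μ + π), hg_pos] with θ hcos hgθ
  rw [quadraticCardioid_sub_antipode, div_mul_eq_mul_div, mul_assoc]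
  exact div_pos (mul_pos hcos hgθ) hden

theorem quadratic_cardioid_antipode_critical_general (μ r1 r2 : ℝ)
    (hne : 4 * r1 * r2 ≠ r1 + r2)
    (I : ℝ) (hI : I = 2 * π * (1 + r1 ^ 2 + r2 ^ 2))
    (f : ℝ → ℝ)
    (hf : ∀ θ, f θ = (1 / I) * (1 + r1 ^ 2 + r2 ^ 2 + 2 * r1 * Real.cos (θ - μ)
      + 2 * r2 * Real.cos (θ - μ) + 2 * r1 * r2 * Real.cos (2 * θ - μ - μ))) :
    deriv f (μ + π) = 0
    ∧ ((∃ ε > 0, ∀ θ : ℝ, θ ≠ μ + π → |θ - (μ + π)| < ε → f θ < f (μ + π))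
        ↔ 4 * r1 * r2 > r1 + r2)
    ∧ (4 * r1 * r2 < r1 + r2 →
        ∃ ε > 0, ∀ θ : ℝ, θ ≠ μ + π → |θ - (μ + π)| < ε → f (μ + π) < f θ) := by
  obtain rfl : f = quadraticCardioid μ μ r1 r2 := by
    funext θ
    rw [hf, hI, quadraticCardioid]
    ring
  simp only [← eventually_nhdsNE_iff_abs_sub_lt]
  have hsign := quadraticCardioid_sub_antipode_mul_pos (μ := μ) (sub_ne_zero.2 hne.symm)
  rcases lt_or_gt_of_ne hne with hlt | hgt
  · have hmin : ∀ᶠ θ in 𝓝[≠] (μ + π), quadraticCardioid μ μ r1 r2 (μ + π) <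
        quadraticCardioid μ μ r1 r2 θ :=
      hsign.mono fun θ h => sub_pos.1 (pos_of_mul_pos_left h (by linarith))
    refine ⟨(IsLocalMin.of_eventually_nhdsNE_lt hmin).deriv_eq_zero,
      ⟨fun hmax => ?_, fun h => absurd h (lt_asymm hlt)⟩, fun _ => hmin⟩
    obtain ⟨θ, h₁, h₂⟩ := (hmax.and hmin).exists
    exact absurd h₁ (lt_asymm h₂)
  · have hmax : ∀ᶠ θ in 𝓝[≠] (μ + π), quadraticCardioid μ μ r1 r2 θ <
        quadraticCardioid μ μ r1 r2 (μ + π) :=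
      hsign.mono fun θ h => sub_neg.1 (neg_of_mul_pos_left h (by linarith))
    exact ⟨(IsLocalMax.of_eventually_nhdsNE_lt hmax).deriv_eq_zero, iff_of_true hmax hgt,
      fun h => absurd h (lt_asymm hgt)⟩

/-- When `μ1 = μ2 = μ` and `r1, r2 > 0` with `4·r1·r2 ≠ r1 + r2`, the point `θ = μ + π`
is a critical point of the quadratic cardioid density; it is a strict local maximum
iff `4·r1·r2 > r1 + r2`, and a strict local minimum if `4·r1·r2 < r1 + r2`. -/
theorem quadratic_cardioid_antipode_critical (μ r1 r2 : ℝ)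
    (hr1 : 0 < r1) (hr2 : 0 < r2) (hne : 4 * r1 * r2 ≠ r1 + r2)
    (I : ℝ) (hI : I = 2 * π * (1 + r1 ^ 2 + r2 ^ 2))
    (f : ℝ → ℝ)
    (hf : ∀ θ, f θ = (1 / I) * (1 + r1 ^ 2 + r2 ^ 2 + 2 * r1 * Real.cos (θ - μ)
      + 2 * r2 * Real.cos (θ - μ) + 2 * r1 * r2 * Real.cos (2 * θ - μ - μ))) :
    deriv f (μ + π) = 0
    ∧ ((∃ ε > 0, ∀ θ : ℝ, θ ≠ μ + π → |θ - (μ + π)| < ε → f θ < f (μ + π))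
        ↔ 4 * r1 * r2 > r1 + r2)
    ∧ (4 * r1 * r2 < r1 + r2 →
        ∃ ε > 0, ∀ θ : ℝ, θ ≠ μ + π → |θ - (μ + π)| < ε → f (μ + π) < f θ) :=
  quadratic_cardioid_antipode_critical_general μ r1 r2 hne I hI f hf
end

section
/- Let f be the quadratic cardioid density with parameters μ1 = μ2 = μ ∈ ℝ and r1, r2 > 0, and suppose 4·r1·r2 > r1 + r2. Then every θ with cos(θ−μ) = −(r1 + r2)/(4·r1·r2) is a critical point of f and is a strict local minimum (anti-mode) of f; there are exactly two such points in each period [μ, μ + 2π). -/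
open Real Filter Topology Set

/-! Completing the square in `x = cos (θ - μ)` writes the density as `K + B (x - c)²` with
`B = 4 r₁ r₂ / I > 0` and `c = -(r₁ + r₂) / (4 r₁ r₂)`; the hypothesis `4 r₁ r₂ > r₁ + r₂` says
`-1 < c`. So the density is smallest exactly where `cos (θ - μ) = c`, which happens at the two
points `μ ± arccos c` (mod `2π`) of each period, and these minima are strict because `cos` has
nonzero derivative `-sin (θ - μ)` there. -/

namespace QuadraticCardioid

theorem numerator_eq_add_mul_sq {r₁ r₂ c : ℝ} (hc : 4 * r₁ * r₂ * c = -(r₁ + r₂)) (μ θ : ℝ) :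
    1 + r₁ ^ 2 + r₂ ^ 2 + 2 * r₁ * cos (θ - μ) + 2 * r₂ * cos (θ - μ)
        + 2 * r₁ * r₂ * cos (2 * θ - μ - μ)
      = 1 + (r₁ - r₂) ^ 2 - 4 * r₁ * r₂ * c ^ 2 + 4 * r₁ * r₂ * (cos (θ - μ) - c) ^ 2 := by
  have hcos2 : cos (2 * θ - μ - μ) = 2 * cos (θ - μ) ^ 2 - 1 := by
    rw [← cos_two_mul]; ring_nf
  rw [hcos2]
  linear_combination (2 * cos (θ - μ)) * hc

theorem hasDerivAt_cos_sub (μ θ : ℝ) : HasDerivAt (fun t => cos (t - μ)) (-sin (θ - μ)) θ := by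
  simpa using ((hasDerivAt_id θ).sub_const μ).cos

section SquaredCosine

variable (K B c μ : ℝ)

theorem hasDerivAt_add_mul_sq_cos_sub (θ : ℝ) :
    HasDerivAt (fun t => K + B * (cos (t - μ) - c) ^ 2)
      (B * (2 * (cos (θ - μ) - c) * -sin (θ - μ))) θ := by
  simpa using ((((hasDerivAt_cos_sub μ θ).sub_const c).pow 2).const_mul B).const_add K

variable {K B c μ}

theorem deriv_add_mul_sq_cos_sub_eq_zero {θ : ℝ} (hθ : cos (θ - μ) = c) :
    deriv (fun t => K + B * (cos (t - μ) - c) ^ 2) θ = 0 := by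
  simp [(hasDerivAt_add_mul_sq_cos_sub K B c μ θ).deriv, hθ]

theorem eventually_add_mul_sq_cos_sub_lt (hB : 0 < B) (hc₁ : -1 < c) (hc₂ : c < 1) {θ : ℝ}
    (hθ : cos (θ - μ) = c) :
    ∀ᶠ t in 𝓝[≠] θ, K + B * (cos (θ - μ) - c) ^ 2 < K + B * (cos (t - μ) - c) ^ 2 := by
  have hsin : -sin (θ - μ) ≠ 0 := by
    rw [neg_ne_zero, Ne, sin_eq_zero_iff_cos_eq, hθ]
    exact fun h => h.elim hc₂.ne hc₁.ne'
  filter_upwards [(hasDerivAt_cos_sub μ θ).eventually_ne (c := c) hsin] with t ht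
  have hsq : 0 < (cos (t - μ) - c) ^ 2 := sq_pos_of_ne_zero (sub_ne_zero.2 ht)
  rw [hθ, sub_self]
  linarith [mul_pos hB hsq]

end SquaredCosine

theorem cos_eq_iff_of_mem_Ico {c s : ℝ} (hc₁ : -1 ≤ c) (hc₂ : c ≤ 1) (hs : s ∈ Ico 0 (2 * π)) :
    cos s = c ↔ s = arccos c ∨ s = 2 * π - arccos c := by
  have harccos : arccos c ∈ Icc 0 π := ⟨arccos_nonneg c, arccos_le_pi c⟩
  have hcos_arccos : cos (arccos c) = c := cos_arccos hc₁ hc₂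
  constructor
  · intro h
    rcases le_or_gt s π with hsπ | hπs
    · exact .inl (injOn_cos ⟨hs.1, hsπ⟩ harccos (h.trans hcos_arccos.symm))
    · have h' : cos (2 * π - s) = cos (arccos c) := by rw [cos_two_pi_sub, h, hcos_arccos]
      refine .inr (eq_sub_of_add_eq ?_)
      linarith [injOn_cos ⟨by linarith [hs.2], by linarith⟩ harccos h']
  · rintro (rfl | rfl)
    · exact hcos_arccos
    · rw [cos_two_pi_sub, hcos_arccos]

end QuadraticCardioid

open QuadraticCardioid in
/-- When `μ1 = μ2 = μ`, `r1, r2 > 0` and `4·r1·r2 > r1 + r2`, every `θ` with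
`cos(θ−μ) = −(r1+r2)/(4·r1·r2)` is a critical point and a strict local minimum
(anti-mode) of the quadratic cardioid density, and there are exactly two such
points in `[μ, μ + 2π)`. -/
theorem quadratic_cardioid_antimodes (μ r1 r2 : ℝ)
    (hr1 : 0 < r1) (hr2 : 0 < r2) (hbi : 4 * r1 * r2 > r1 + r2)
    (I : ℝ) (hI : I = 2 * π * (1 + r1 ^ 2 + r2 ^ 2))
    (f : ℝ → ℝ)
    (hf : ∀ θ, f θ = (1 / I) * (1 + r1 ^ 2 + r2 ^ 2 + 2 * r1 * Real.cos (θ - μ)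
      + 2 * r2 * Real.cos (θ - μ) + 2 * r1 * r2 * Real.cos (2 * θ - μ - μ))) :
    (∀ θ : ℝ, Real.cos (θ - μ) = -(r1 + r2) / (4 * r1 * r2) →
      deriv f θ = 0 ∧ ∃ ε > 0, ∀ θ' : ℝ, θ' ≠ θ → |θ' - θ| < ε → f θ < f θ')
    ∧ ∃ θ1 θ2 : ℝ, θ1 ≠ θ2
        ∧ θ1 ∈ Set.Ico μ (μ + 2 * π) ∧ θ2 ∈ Set.Ico μ (μ + 2 * π)
        ∧ Real.cos (θ1 - μ) = -(r1 + r2) / (4 * r1 * r2)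
        ∧ Real.cos (θ2 - μ) = -(r1 + r2) / (4 * r1 * r2)
        ∧ ∀ θ ∈ Set.Ico μ (μ + 2 * π),
            Real.cos (θ - μ) = -(r1 + r2) / (4 * r1 * r2) → θ = θ1 ∨ θ = θ2 := by
  set c := -(r1 + r2) / (4 * r1 * r2)
  have hprod : 0 < 4 * r1 * r2 := by positivity
  have hc : 4 * r1 * r2 * c = -(r1 + r2) := mul_div_cancel₀ _ hprod.ne'
  have hc₁ : -1 < c := by nlinarith
  have hc₂ : c < 1 := by nlinarith
  have hB : 0 < 4 * r1 * r2 / I := by rw [hI]; positivity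
  obtain ⟨K, hf_sq⟩ : ∃ K, f = fun θ => K + 4 * r1 * r2 / I * (cos (θ - μ) - c) ^ 2 :=
    ⟨(1 + (r1 - r2) ^ 2 - 4 * r1 * r2 * c ^ 2) / I,
      funext fun θ => by rw [hf, numerator_eq_add_mul_sq hc]; ring⟩
  refine ⟨fun θ hθ => ⟨?_, ?_⟩, μ + arccos c, μ + (2 * π - arccos c), ?_⟩
  · rw [hf_sq]; exact deriv_add_mul_sq_cos_sub_eq_zero hθ
  · obtain ⟨ε, hε, hlt⟩ := Metric.eventually_nhds_iff.1
      (eventually_nhdsWithin_iff.1 (eventually_add_mul_sq_cos_sub_lt hB hc₁ hc₂ hθ))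
    exact ⟨ε, hε, fun θ' hne hdist => hf_sq ▸ hlt (by rwa [Real.dist_eq]) hne⟩
  · have hroots (θ : ℝ) (hθ : θ ∈ Ico μ (μ + 2 * π)) :
        cos (θ - μ) = c ↔ θ = μ + arccos c ∨ θ = μ + (2 * π - arccos c) := by
      have hs : θ - μ ∈ Ico 0 (2 * π) := ⟨by linarith [hθ.1], by linarith [hθ.2]⟩
      rw [cos_eq_iff_of_mem_Ico hc₁.le hc₂.le hs, sub_eq_iff_eq_add', sub_eq_iff_eq_add']
    have h0 : 0 < arccos c := arccos_pos.2 hc₂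
    have hπ : arccos c < π := arccos_lt_pi.2 hc₁
    have hmem₁ : μ + arccos c ∈ Ico μ (μ + 2 * π) := ⟨by linarith, by linarith⟩
    have hmem₂ : μ + (2 * π - arccos c) ∈ Ico μ (μ + 2 * π) := ⟨by linarith, by linarith⟩
    exact ⟨by linarith, hmem₁, hmem₂, (hroots _ hmem₁).2 (.inl rfl), (hroots _ hmem₂).2 (.inr rfl),
      fun θ hθ => (hroots θ hθ).1⟩
end
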